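/- Let β > 2, γ > -1, K > 0, and let ξ be i.i.d. centered with E|ξ|^p ≤ K (β-p)^{-γ-1} for all p ∈ [2, β). Then there is C = C(β, γ, K) such that for every finite family ξ_1, …, ξ_n of independent copies and every p ∈ [2, β): E| n^{-1/2} Σ ξ_i |^p ≤ C (β-p)^{-γ-1}, with C independent of both n and p. -/

import Mathlib

open MeasureTheory Real ProbabilityTheory

/-!
For `2 ≤ p ≤ B` there is a second-order expansion
`|a + b|^p ≤ |a|^p + p |a|^(p-2) a b + c(B) (|a|^(p-2) b² + |b|^p)` whose constant depends on `B`
only: it is Taylor's bound when `|b| ≤ |a|/2` and a crude bound otherwise. With `a = Sₖ` and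
`b = ξₖ`, the cross term has expectation zero by independence and centering, and Young's
inequality `|a|^(p-2) b² ≤ t |a|^p + t^(1-p/2) |b|^p` with `t ≍ 1/k` turns the expansion into a
recursion whose solution is `E|Sₙ|^p ≤ R(B) E|ξ|^p n^(p/2)` (a Rosenthal inequality with constant
uniform in `p ≤ B`). Taking `B = β` and dividing by `n^(p/2)` gives the theorem.
-/

lemma exp_mul_one_sub_le_one (x : ℝ) : exp x * (1 - x) ≤ 1 := by
  calc exp x * (1 - x) ≤ exp x * exp (-x) := by gcongr; linarith [add_one_le_exp (-x)]
    _ = 1 := by rw [← exp_add, add_neg_cancel, exp_zero]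

lemma exp_le_one_add_add_sq_mul_exp_abs (x : ℝ) : exp x ≤ 1 + x + x ^ 2 * exp |x| := by
  have hx := exp_mul_one_sub_le_one x
  rcases le_total x 0 with hneg | hpos
  · have : 1 ≤ exp |x| := one_le_exp (abs_nonneg x)
    nlinarith [exp_pos x, pow_two_nonneg x, mul_nonneg (neg_nonneg.2 hneg) (pow_two_nonneg x)]
  · rw [abs_of_nonneg hpos]
    nlinarith [exp_pos x, mul_nonneg hpos (exp_pos x).le]

lemma one_add_rpow_le {p B s : ℝ} (hp : 0 ≤ p) (hpB : p ≤ B) (hs : |s| ≤ 1 / 2) :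
    (1 + s) ^ p ≤ 1 + p * s + B ^ 2 * exp B * s ^ 2 := by
  have hsp : |s * p| ≤ B := by
    rw [abs_mul, abs_of_nonneg hp]; nlinarith [abs_nonneg s]
  calc (1 + s) ^ p ≤ exp s ^ p := by
        gcongr
        · linarith [neg_abs_le s]
        · linarith [add_one_le_exp s]
    _ = exp (s * p) := (exp_mul s p).symm
    _ ≤ 1 + s * p + (s * p) ^ 2 * exp |s * p| := exp_le_one_add_add_sq_mul_exp_abs _
    _ ≤ 1 + p * s + B ^ 2 * exp B * s ^ 2 := by
        have : (s * p) ^ 2 ≤ B ^ 2 * s ^ 2 := by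
          rw [mul_pow, mul_comm]; gcongr
        have := exp_le_exp.2 hsp
        nlinarith [sq_nonneg (s * p), exp_pos |s * p|, sq_nonneg s]

lemma abs_rpow_eq_rpow_sub_two_mul_sq {a : ℝ} (ha : a ≠ 0) (p : ℝ) :
    |a| ^ p = |a| ^ (p - 2) * a ^ 2 := by
  rw [rpow_sub (abs_pos.2 ha), rpow_two, sq_abs, div_mul_cancel₀ _ (pow_ne_zero 2 ha)]

lemma abs_add_rpow_le_of_two_mul_abs_le {a b p B : ℝ} (hp : 0 ≤ p) (hpB : p ≤ B)
    (hab : 2 * |b| ≤ |a|) :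
    |a + b| ^ p ≤
      |a| ^ p + p * |a| ^ (p - 2) * a * b + B ^ 2 * exp B * (|a| ^ (p - 2) * b ^ 2) := by
  rcases eq_or_ne a 0 with rfl | ha
  · obtain rfl : b = 0 := abs_nonpos_iff.1 (by linarith [abs_zero (α := ℝ)])
    simp
  have hs : |b / a| ≤ 1 / 2 := by
    rw [abs_div, div_le_iff₀ (abs_pos.2 ha)]; linarith
  have h1s : 0 ≤ 1 + b / a := by linarith [neg_abs_le (b / a)]
  have hsum : |a + b| = |a| * (1 + b / a) := by
    rw [← abs_of_nonneg h1s, ← abs_mul, mul_one_add, mul_div_cancel₀ _ ha]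
  calc |a + b| ^ p = |a| ^ p * (1 + b / a) ^ p := by rw [hsum, mul_rpow (abs_nonneg a) h1s]
    _ ≤ |a| ^ p * (1 + p * (b / a) + B ^ 2 * exp B * (b / a) ^ 2) := by
        gcongr; exact one_add_rpow_le hp hpB hs
    _ = _ := by rw [abs_rpow_eq_rpow_sub_two_mul_sq ha]; field_simp

lemma abs_add_rpow_le_of_abs_lt_two_mul {a b p B : ℝ} (hp : 1 ≤ p) (hpB : p ≤ B)
    (hab : |a| < 2 * |b|) :
    |a + b| ^ p ≤ |a| ^ p + p * |a| ^ (p - 2) * a * b + (3 ^ B + B * 2 ^ B) * |b| ^ p := by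
  have hb : 0 ≤ |b| := abs_nonneg b
  have hsum : |a + b| ^ p ≤ 3 ^ B * |b| ^ p := by
    calc |a + b| ^ p ≤ (3 * |b|) ^ p := by gcongr; linarith [abs_add_le a b]
      _ = 3 ^ p * |b| ^ p := mul_rpow (by norm_num) hb
      _ ≤ 3 ^ B * |b| ^ p := by gcongr; norm_num
  have hlin : |a| ^ (p - 2) * |a| * |b| ≤ 2 ^ B * |b| ^ p := by
    rcases eq_or_ne a 0 with rfl | ha
    · simp only [abs_zero, mul_zero, zero_mul]; positivity
    calc |a| ^ (p - 2) * |a| * |b| = |a| ^ (p - 1) * |b| := by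
          rw [← rpow_add_one (abs_pos.2 ha).ne']; ring_nf
      _ ≤ (2 * |b|) ^ (p - 1) * |b| := by gcongr
      _ = 2 ^ (p - 1) * |b| ^ p := by
          rw [mul_rpow (by norm_num) hb, mul_assoc, ← rpow_add_one' hb (by linarith)]; ring_nf
      _ ≤ 2 ^ B * |b| ^ p := by gcongr; norm_num; linarith
  have hcross : -(B * 2 ^ B * |b| ^ p) ≤ p * |a| ^ (p - 2) * a * b := by
    have := neg_abs_le (p * |a| ^ (p - 2) * a * b)
    rw [abs_mul, abs_mul, abs_mul, abs_of_nonneg (by linarith : 0 ≤ p),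
      abs_of_nonneg (by positivity : 0 ≤ |a| ^ (p - 2))] at this
    have : p * (|a| ^ (p - 2) * |a| * |b|) ≤ B * (2 ^ B * |b| ^ p) :=
      mul_le_mul hpB hlin (by positivity) (by linarith)
    nlinarith
  have : 0 ≤ |a| ^ p := by positivity
  linarith

/-- `B² e^B` comes from the case `2|b| ≤ |a|`, `3^B + B 2^B` from the case `|a| < 2|b|`. -/
noncomputable def taylorRemainderConst (B : ℝ) : ℝ := B ^ 2 * exp B + 3 ^ B + B * 2 ^ B

lemma one_le_taylorRemainderConst {B : ℝ} (hB : 0 ≤ B) : 1 ≤ taylorRemainderConst B := by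
  have : 1 ≤ (3 : ℝ) ^ B := one_le_rpow (by norm_num) hB
  have : 0 ≤ B ^ 2 * exp B + B * 2 ^ B := by positivity
  unfold taylorRemainderConst; linarith

lemma abs_add_rpow_le {a b p B : ℝ} (hp : 1 ≤ p) (hpB : p ≤ B) :
    |a + b| ^ p ≤ |a| ^ p + p * |a| ^ (p - 2) * a * b
      + taylorRemainderConst B * (|a| ^ (p - 2) * b ^ 2 + |b| ^ p) := by
  have hB : 0 ≤ B := by linarith
  have hsq : 0 ≤ |a| ^ (p - 2) * b ^ 2 := by positivity
  have hpow : 0 ≤ |b| ^ p := by positivity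
  have hD : 0 ≤ B ^ 2 * exp B := by positivity
  have hE : 0 ≤ 3 ^ B + B * 2 ^ B := by positivity
  unfold taylorRemainderConst
  rcases le_or_gt (2 * |b|) |a| with hab | hab
  · have := abs_add_rpow_le_of_two_mul_abs_le (by linarith) hpB hab
    nlinarith [mul_nonneg hD hpow, mul_nonneg hE hsq, mul_nonneg hE hpow]
  · have := abs_add_rpow_le_of_abs_lt_two_mul hp hpB hab
    nlinarith [mul_nonneg hD hpow, mul_nonneg hD hsq, mul_nonneg hE hsq]

lemma rpow_sub_two_mul_sq_le {p t x y : ℝ} (hp : 2 ≤ p) (ht : 0 < t) (hx : 0 ≤ x) (hy : 0 ≤ y) :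
    x ^ (p - 2) * y ^ 2 ≤ t * x ^ p + t ^ ((2 - p) / 2) * y ^ p := by
  have hp0 : 0 < p := by linarith
  have hxp : 0 ≤ t * x ^ p := by positivity
  have hyp : 0 ≤ t ^ ((2 - p) / 2) * y ^ p := by positivity
  have hw₁ : 0 ≤ (p - 2) / p := div_nonneg (by linarith) hp0.le
  have hw₂ : 0 ≤ 2 / p := by positivity
  have amgm := geom_mean_le_arith_mean2_weighted hw₁ hw₂ hxp hyp (by field_simp; ring)
  have hgeom : (t * x ^ p) ^ ((p - 2) / p) * (t ^ ((2 - p) / 2) * y ^ p) ^ (2 / p)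
      = x ^ (p - 2) * y ^ 2 := by
    rw [mul_rpow ht.le (by positivity), mul_rpow (by positivity) (by positivity),
      ← rpow_mul hx, ← rpow_mul hy, ← rpow_mul ht.le, ← rpow_natCast y 2]
    rw [show p * ((p - 2) / p) = p - 2 by field_simp, show p * (2 / p) = ((2 : ℕ) : ℝ) by
      field_simp; norm_num, show (2 - p) / 2 * (2 / p) = -((p - 2) / p) by field_simp; ring,
      rpow_neg ht.le]
    field_simp
  rw [hgeom] at amgm
  have h₁ : (p - 2) / p ≤ 1 := by rw [div_le_one hp0]; linarith
  have h₂ : 2 / p ≤ 1 := by rw [div_le_one hp0]; linarith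
  nlinarith

lemma abs_add_rpow_le_one_add_mul {a b p B t : ℝ} (hp : 2 ≤ p) (hpB : p ≤ B) (ht : 0 < t) :
    |a + b| ^ p ≤ (1 + taylorRemainderConst B * t) * |a| ^ p + p * |a| ^ (p - 2) * a * b
      + taylorRemainderConst B * (t ^ ((2 - p) / 2) + 1) * |b| ^ p := by
  have hc := one_le_taylorRemainderConst (show 0 ≤ B by linarith)
  have hyoung := rpow_sub_two_mul_sq_le hp ht (abs_nonneg a) (abs_nonneg b)
  rw [sq_abs] at hyoung
  have := abs_add_rpow_le (a := a) (b := b) (by linarith) hpB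
  nlinarith [mul_le_mul_of_nonneg_left hyoung (by linarith : 0 ≤ taylorRemainderConst B)]

lemma abs_rpow_sub_two_mul_abs_le {p : ℝ} (hp : 1 ≤ p) (x : ℝ) :
    |x| ^ (p - 2) * |x| ≤ 1 + |x| ^ p := by
  rcases eq_or_ne x 0 with rfl | hx
  · simp only [abs_zero, mul_zero]; positivity
  rw [← rpow_add_one (abs_pos.2 hx).ne', show p - 2 + 1 = p - 1 by ring]
  rcases le_total |x| 1 with hle | hle
  · linarith [rpow_le_one (abs_nonneg x) hle (by linarith : 0 ≤ p - 1),
      rpow_nonneg (abs_nonneg x) p]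
  · linarith [rpow_le_rpow_of_exponent_le hle (by linarith : p - 1 ≤ p)]

lemma rpow_mul_one_add_add_rpow_sub_one_le {q x : ℝ} (hq : 1 ≤ q) (hx : 0 ≤ x) :
    x ^ q * (1 + (2 * (x + 1))⁻¹) + (x + 1) ^ (q - 1) / 2 ≤ (x + 1) ^ q := by
  have hsplit : ∀ y : ℝ, 0 ≤ y → y ^ q = y ^ (q - 1) * y := fun y hy => by
    rw [← rpow_add_one' hy (by linarith)]; ring_nf
  have hmono : x ^ (q - 1) ≤ (x + 1) ^ (q - 1) := by gcongr; linarith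
  have hx' : x * (1 + (2 * (x + 1))⁻¹) ≤ x + 1 / 2 := by
    have : x / (2 * (x + 1)) ≤ 1 / 2 := by rw [div_le_iff₀ (by positivity)]; linarith
    rw [mul_one_add, ← div_eq_mul_inv]; linarith
  rw [hsplit x hx, hsplit (x + 1) (by linarith)]
  calc x ^ (q - 1) * x * (1 + (2 * (x + 1))⁻¹) + (x + 1) ^ (q - 1) / 2
      ≤ x ^ (q - 1) * (x + 1 / 2) + (x + 1) ^ (q - 1) / 2 := by
        rw [mul_assoc]; gcongr
    _ ≤ (x + 1) ^ (q - 1) * (x + 1 / 2) + (x + 1) ^ (q - 1) / 2 := by gcongr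
    _ = (x + 1) ^ (q - 1) * (x + 1) := by ring

/-- With `t = (2c(x+1))⁻¹` the loss `c t` in front of `E|Sₖ|^p` costs only part of the
increment `(x+1)^(p/2) - x^(p/2)`, and the remaining part pays for `c (t^(1-p/2) + 1) E|ξ|^p`. -/
lemma moment_recursion_le {c m p x A M : ℝ} (hc : 0 < c) (hm : 0 ≤ m) (hp : 2 ≤ p) (hx : 0 ≤ x)
    (hM : 2 * c * ((2 * c) ^ (p / 2 - 1) + 1) * m ≤ M) (hA : A ≤ M * x ^ (p / 2)) :
    (1 + c * (2 * c * (x + 1))⁻¹) * A + c * (((2 * c * (x + 1))⁻¹) ^ ((2 - p) / 2) + 1) * m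
      ≤ M * (x + 1) ^ (p / 2) := by
  have hct : c * (2 * c * (x + 1))⁻¹ = (2 * (x + 1))⁻¹ := by field_simp
  have htpow : ((2 * c * (x + 1))⁻¹) ^ ((2 - p) / 2)
      = (2 * c) ^ (p / 2 - 1) * (x + 1) ^ (p / 2 - 1) := by
    rw [inv_rpow (by positivity), ← rpow_neg (by positivity),
      mul_rpow (by positivity) (by linarith)]
    ring_nf
  have hY : 1 ≤ (x + 1) ^ (p / 2 - 1) := one_le_rpow (by linarith) (by linarith)
  have hW : 0 ≤ (2 * c) ^ (p / 2 - 1) := by positivity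
  have hgrowth := rpow_mul_one_add_add_rpow_sub_one_le (q := p / 2) (by linarith) hx
  have hM0 : 0 ≤ M := le_trans (by positivity) hM
  rw [hct, htpow]
  calc (1 + (2 * (x + 1))⁻¹) * A + c * ((2 * c) ^ (p / 2 - 1) * (x + 1) ^ (p / 2 - 1) + 1) * m
      ≤ M * (x ^ (p / 2) * (1 + (2 * (x + 1))⁻¹))
        + 2 * c * ((2 * c) ^ (p / 2 - 1) + 1) * m * ((x + 1) ^ (p / 2 - 1) / 2) := by
        gcongr ?_ + ?_
        · nlinarith [show 0 ≤ (2 * (x + 1))⁻¹ by positivity]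
        · nlinarith [mul_nonneg (mul_nonneg hc.le hW) hm, mul_nonneg hc.le hm]
    _ ≤ M * (x ^ (p / 2) * (1 + (2 * (x + 1))⁻¹)) + M * ((x + 1) ^ (p / 2 - 1) / 2) := by
        gcongr
    _ ≤ M * (x + 1) ^ (p / 2) := by rw [← mul_add]; gcongr

noncomputable def rosenthalConst (B : ℝ) : ℝ :=
  2 * taylorRemainderConst B * ((2 * taylorRemainderConst B) ^ (B / 2 - 1) + 1)

lemma le_rosenthalConst {p B : ℝ} (hp : 2 ≤ p) (hpB : p ≤ B) :
    2 * taylorRemainderConst B * ((2 * taylorRemainderConst B) ^ (p / 2 - 1) + 1)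
      ≤ rosenthalConst B := by
  have hc := one_le_taylorRemainderConst (show 0 ≤ B by linarith)
  unfold rosenthalConst
  gcongr; linarith

lemma rosenthalConst_pos {B : ℝ} (hB : 0 ≤ B) : 0 < rosenthalConst B := by
  have hc := one_le_taylorRemainderConst hB
  unfold rosenthalConst
  positivity

lemma abs_inv_sqrt_mul_rpow {y : ℝ} (hy : 0 ≤ y) (x p : ℝ) :
    |(√y)⁻¹ * x| ^ p = (y ^ (p / 2))⁻¹ * |x| ^ p := by
  rw [abs_mul, abs_of_nonneg (by positivity), mul_rpow (by positivity) (abs_nonneg x),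
    inv_rpow (sqrt_nonneg y), sqrt_eq_rpow, ← rpow_mul hy, one_div_mul_eq_div]

section

variable {Ω : Type*} [MeasurableSpace Ω] {μ : Measure Ω}

lemma integral_abs_add_rpow_le [IsFiniteMeasure μ] {S X : Ω → ℝ} {p B t : ℝ}
    (hS : Measurable S) (hX : Measurable X) (hSX : IndepFun S X μ)
    (hXint : Integrable X μ) (hXcent : ∫ ω, X ω ∂μ = 0)
    (hSp : Integrable (fun ω => |S ω| ^ p) μ) (hXp : Integrable (fun ω => |X ω| ^ p) μ)
    (hp : 2 ≤ p) (hpB : p ≤ B) (ht : 0 < t) :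
    Integrable (fun ω => |S ω + X ω| ^ p) μ ∧
      ∫ ω, |S ω + X ω| ^ p ∂μ ≤ (1 + taylorRemainderConst B * t) * ∫ ω, |S ω| ^ p ∂μ
        + taylorRemainderConst B * (t ^ ((2 - p) / 2) + 1) * ∫ ω, |X ω| ^ p ∂μ := by
  set c := taylorRemainderConst B
  set φ : ℝ → ℝ := fun x => p * |x| ^ (p - 2) * x
  have hφ : Measurable φ := by fun_prop
  have hφS : Integrable (fun ω => φ (S ω)) μ := by
    refine (((integrable_const 1).add hSp).const_mul p).mono' (hφ.comp hS).aestronglyMeasurable ?_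
    refine .of_forall fun ω => ?_
    rw [norm_eq_abs, abs_mul, abs_mul, abs_of_nonneg (by linarith : 0 ≤ p),
      abs_of_nonneg (by positivity : 0 ≤ |S ω| ^ (p - 2)), mul_assoc]
    gcongr
    exact abs_rpow_sub_two_mul_abs_le (by linarith) _
  have hindep : IndepFun (fun ω => φ (S ω)) X μ := hSX.comp hφ measurable_id
  have hcross : Integrable (fun ω => φ (S ω) * X ω) μ := hindep.integrable_mul hφS hXint
  have hcross_zero : ∫ ω, φ (S ω) * X ω ∂μ = 0 := by
    rw [hindep.integral_fun_mul_eq_mul_integral hφS.aestronglyMeasurable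
      hXint.aestronglyMeasurable, hXcent, mul_zero]
  have hSφ : Integrable (fun ω => (1 + c * t) * |S ω| ^ p + φ (S ω) * X ω) μ :=
    (hSp.const_mul _).add hcross
  have hbound : Integrable (fun ω => (1 + c * t) * |S ω| ^ p + φ (S ω) * X ω
      + c * (t ^ ((2 - p) / 2) + 1) * |X ω| ^ p) μ :=
    hSφ.add (hXp.const_mul _)
  have hpointwise : ∀ ω, |S ω + X ω| ^ p ≤ (1 + c * t) * |S ω| ^ p + φ (S ω) * X ω
      + c * (t ^ ((2 - p) / 2) + 1) * |X ω| ^ p := fun ω =>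
    abs_add_rpow_le_one_add_mul hp hpB ht
  have hint : Integrable (fun ω => |S ω + X ω| ^ p) μ := by
    refine hbound.mono' ((hS.add hX).abs.pow_const p).aestronglyMeasurable (.of_forall fun ω => ?_)
    rw [norm_of_nonneg (by positivity)]
    exact hpointwise ω
  refine ⟨hint, (integral_mono hint hbound hpointwise).trans_eq ?_⟩
  rw [integral_add hSφ (hXp.const_mul _),
    integral_add (hSp.const_mul _) hcross, integral_const_mul, integral_const_mul, hcross_zero,
    add_zero]

lemma integral_abs_sum_rpow_le [IsFiniteMeasure μ] {ξ : ℕ → Ω → ℝ} {p B m : ℝ}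
    (hmeas : ∀ i, Measurable (ξ i)) (hindep : iIndepFun ξ μ) (hint : ∀ i, Integrable (ξ i) μ)
    (hcent : ∀ i, ∫ ω, ξ i ω ∂μ = 0) (hintp : ∀ i, Integrable (fun ω => |ξ i ω| ^ p) μ)
    (hmom : ∀ i, ∫ ω, |ξ i ω| ^ p ∂μ ≤ m) (hp : 2 ≤ p) (hpB : p ≤ B) (n : ℕ) :
    Integrable (fun ω => |∑ i ∈ Finset.range n, ξ i ω| ^ p) μ ∧
      ∫ ω, |∑ i ∈ Finset.range n, ξ i ω| ^ p ∂μ ≤ rosenthalConst B * m * n ^ (p / 2) := by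
  set c := taylorRemainderConst B
  have hc : 0 < c := by linarith [one_le_taylorRemainderConst (show 0 ≤ B by linarith)]
  have hm : 0 ≤ m := (integral_nonneg fun ω => by positivity).trans (hmom 0)
  induction n with
  | zero => simp [zero_rpow (by linarith : p ≠ 0), zero_rpow (by linarith : p / 2 ≠ 0)]
  | succ k ih =>
    set S : Ω → ℝ := fun ω => ∑ i ∈ Finset.range k, ξ i ω
    have hS : Measurable S := Finset.measurable_sum _ fun i _ => hmeas i
    have hSξ : IndepFun S (ξ k) μ := by
      simpa [S, Finset.sum_fn] using hindep.indepFun_sum_range_succ hmeas k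
    obtain ⟨hint', hle⟩ := integral_abs_add_rpow_le hS (hmeas k) hSξ (hint k) (hcent k) ih.1
      (hintp k) hp hpB (t := (2 * c * (k + 1))⁻¹) (by positivity)
    simp only [Finset.sum_range_succ, Nat.cast_succ]
    refine ⟨hint', hle.trans ?_⟩
    calc _ ≤ (1 + c * (2 * c * (k + 1))⁻¹) * ∫ ω, |S ω| ^ p ∂μ
          + c * (((2 * c * (k + 1))⁻¹) ^ ((2 - p) / 2) + 1) * m := by gcongr; exact hmom k
      _ ≤ _ := moment_recursion_le hc hm hp k.cast_nonneg
          (by gcongr; exact le_rosenthalConst hp hpB) ih.2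

lemma integrable_and_integral_le_of_lintegral_le {f : Ω → ℝ} {m : ℝ}
    (hf : AEStronglyMeasurable f μ) (hf0 : ∀ ω, 0 ≤ f ω) (hm : 0 ≤ m)
    (h : ∫⁻ ω, ENNReal.ofReal (f ω) ∂μ ≤ ENNReal.ofReal m) :
    Integrable f μ ∧ ∫ ω, f ω ∂μ ≤ m := by
  have hfin : HasFiniteIntegral f μ :=
    (hasFiniteIntegral_iff_ofReal (.of_forall hf0)).2 (h.trans_lt ENNReal.ofReal_lt_top)
  refine ⟨⟨hf, hfin⟩, ?_⟩
  rw [integral_eq_lintegral_of_nonneg_ae (.of_forall hf0) hf]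
  exact ENNReal.toReal_le_of_le_ofReal hm h

end

theorem stmt_13_general {Ω : Type*} [MeasurableSpace Ω] (μ : Measure Ω) [IsProbabilityMeasure μ]
    (β γ K : ℝ) (hβ : 2 < β) (hK : 0 < K)
    (ξ : ℕ → Ω → ℝ) (hmeas : ∀ i, Measurable (ξ i))
    (hindep : iIndepFun ξ μ)
    (hident : ∀ i, IdentDistrib (ξ i) (ξ 0) μ μ)
    (hint : Integrable (ξ 0) μ) (hcent : ∫ ω, ξ 0 ω ∂μ = 0)
    (hmom : ∀ p : ℝ, 2 ≤ p → p < β →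
      ∫⁻ ω, ENNReal.ofReal (|ξ 0 ω| ^ p) ∂μ ≤ ENNReal.ofReal (K * (β - p) ^ (-γ - 1))) :
    ∃ C > (0 : ℝ), ∀ n : ℕ, ∀ p : ℝ, 2 ≤ p → p < β →
      ∫⁻ ω, ENNReal.ofReal (|(Real.sqrt n)⁻¹ * ∑ i ∈ Finset.range n, ξ i ω| ^ p) ∂μ
        ≤ ENNReal.ofReal (C * (β - p) ^ (-γ - 1)) := by
  have hR : 0 < rosenthalConst β := rosenthalConst_pos (by linarith)
  refine ⟨rosenthalConst β * K, mul_pos hR hK, ?_⟩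
  intro n p hp hpβ
  have habs : Measurable fun x : ℝ => |x| ^ p := measurable_abs.pow_const p
  have hbound : 0 ≤ K * (β - p) ^ (-γ - 1) := mul_nonneg hK.le (rpow_nonneg (by linarith) _)
  obtain ⟨hint₀, hmom₀⟩ := integrable_and_integral_le_of_lintegral_le
    (habs.comp (hmeas 0)).aestronglyMeasurable (fun ω => rpow_nonneg (abs_nonneg _) p)
    hbound (hmom p hp hpβ)
  obtain ⟨hsum, hsum_le⟩ := integral_abs_sum_rpow_le hmeas hindep
    (fun i => (hident i).integrable_iff.2 hint) (fun i => (hident i).integral_eq.trans hcent)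
    (fun i => ((hident i).comp habs).integrable_iff.2 hint₀)
    (fun i => ((hident i).comp habs).integral_eq.trans_le hmom₀) hp hpβ.le n
  simp_rw [abs_inv_sqrt_mul_rpow n.cast_nonneg]
  rw [← ofReal_integral_eq_lintegral_ofReal (hsum.const_mul _) (.of_forall fun ω => by positivity),
    integral_const_mul]
  refine ENNReal.ofReal_le_ofReal (inv_mul_le_of_le_mul₀ (by positivity)
    (by rw [mul_assoc]; exact mul_nonneg hR.le hbound) (hsum_le.trans_eq (by ring)))

theorem stmt_13 {Ω : Type*} [MeasurableSpace Ω] (μ : Measure Ω) [IsProbabilityMeasure μ]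
    (β γ K : ℝ) (hβ : 2 < β) (hγ : -1 < γ) (hK : 0 < K)
    (ξ : ℕ → Ω → ℝ) (hmeas : ∀ i, Measurable (ξ i))
    (hindep : iIndepFun ξ μ)
    (hident : ∀ i, IdentDistrib (ξ i) (ξ 0) μ μ)
    (hint : Integrable (ξ 0) μ) (hcent : ∫ ω, ξ 0 ω ∂μ = 0)
    (hmom : ∀ p : ℝ, 2 ≤ p → p < β →
      ∫⁻ ω, ENNReal.ofReal (|ξ 0 ω| ^ p) ∂μ ≤ ENNReal.ofReal (K * (β - p) ^ (-γ - 1))) :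
    ∃ C > (0 : ℝ), ∀ n : ℕ, ∀ p : ℝ, 2 ≤ p → p < β →
      ∫⁻ ω, ENNReal.ofReal (|(Real.sqrt n)⁻¹ * ∑ i ∈ Finset.range n, ξ i ω| ^ p) ∂μ
        ≤ ENNReal.ofReal (C * (β - p) ^ (-γ - 1)) :=
  stmt_13_general μ β γ K hβ hK ξ hmeas hindep hident hint hcent hmom
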